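/- Every simplicial tree is contractible; in particular, all reduced simplicial homology groups of a simplicial tree vanish. -/

import Mathlib

/-!
Induction on the number of facets. A leaf `F` of a tree meets its joint `G` by connectedness;
pick `v ∈ F ∩ G` and let `Δ'` be the complex spanned by the other facets. Faces of `Δ` outside
`Δ'` lie in `F`, so they can be coned off to `v` inside `Δ`; faces of `F` that do lie in `Δ'`
lie in `G`, so coning them to `v` stays in `Δ'`. The cone operator is therefore a chain homotopy
from the identity to a map into the chains of `Δ'`, and every cycle of `Δ` is homologous to a
cycle of the tree `Δ'`. When `F` is the only facet, `Δ'` is empty and `Δ` is a cone.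
-/

noncomputable section
attribute [local instance] Classical.propDecidable

/-- The simplicial complex generated by a set of faces: all nonempty subsets. -/
def gen {V : Type} (S : Finset (Finset V)) : Finset (Finset V) :=
  S.biUnion fun F => F.powerset.filter (· ≠ ∅)

/-- The facets (maximal faces) of a complex given by its finite set of faces. -/
def facets {V : Type} (Δ : Finset (Finset V)) : Finset (Finset V) :=
  Δ.filter fun F => ∀ G ∈ Δ, F ⊆ G → F = G

/-- A (finite, abstract) simplicial complex: nonempty faces, closed under nonempty subsets. -/
def IsComplex {V : Type} (Δ : Finset (Finset V)) : Prop :=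
  ∅ ∉ Δ ∧ ∀ F ∈ Δ, ∀ G, G ⊆ F → G ≠ ∅ → G ∈ Δ

/-- `F` is a leaf of `Δ`: `F` is a facet which is either the only facet, or
there is another facet `G` (a joint) with `F ∩ (Δ ∖ F) ⊆ G`, i.e. the
intersection of `F` with any other facet is contained in `G`. -/
def IsLeaf {V : Type} (Δ : Finset (Finset V)) (F : Finset V) : Prop :=
  F ∈ facets Δ ∧ (facets Δ = {F} ∨
    ∃ G ∈ facets Δ, G ≠ F ∧ ∀ H ∈ facets Δ, H ≠ F → F ∩ H ⊆ G)

def HasLeaf {V : Type} (Δ : Finset (Finset V)) : Prop := ∃ F, IsLeaf Δ F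

/-- A forest: every nonempty subcollection (complex generated by a subset of the
facets) has a leaf. -/
def IsForest {V : Type} (Δ : Finset (Finset V)) : Prop :=
  ∀ S ⊆ facets Δ, S.Nonempty → HasLeaf (gen S)

/-- Vertex set of a complex. -/
def vtx {V : Type} (Δ : Finset (Finset V)) : Finset V := Δ.sup id

/-- Connectedness: nonempty, and any two vertices are joined by a chain of faces. -/
def Conn {V : Type} (Δ : Finset (Finset V)) : Prop :=
  Δ.Nonempty ∧ ∀ u ∈ vtx Δ, ∀ v ∈ vtx Δ,
    Relation.ReflTransGen (fun a b => ∃ σ ∈ Δ, a ∈ σ ∧ b ∈ σ) u v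

/-- A simplicial tree is a connected forest. -/
def IsTree {V : Type} (Δ : Finset (Finset V)) : Prop := Conn Δ ∧ IsForest Δ

/-- The group of reduced simplicial `(n-1)`-chains over `ℤ`: the free `ℤ`-module on
the faces of `Δ` of cardinality `n` (with the empty face included in degree `0`). -/
abbrev RChain {V : Type} (Δ : Finset (Finset V)) (n : ℕ) :=
  {F : Finset V // (F ∈ Δ ∨ F = ∅) ∧ F.card = n} →₀ ℤ

/-- The simplicial boundary map of the (augmented) reduced chain complex of `Δ`. -/
noncomputable def bd {V : Type} [LinearOrder V] (Δ : Finset (Finset V)) (n : ℕ) :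
    RChain Δ (n + 1) →ₗ[ℤ] RChain Δ n :=
  Finsupp.lsum ℤ fun F => LinearMap.toSpanSingleton ℤ (RChain Δ n)
    (∑ x ∈ F.1.attach,
      if h : ((F.1.erase x.1 ∈ Δ ∨ F.1.erase x.1 = ∅) ∧ (F.1.erase x.1).card = n) then
        ((-1 : ℤ) ^ ((F.1.filter (· < x.1)).card)) • Finsupp.single ⟨F.1.erase x.1, h⟩ 1
      else 0)

/-- All reduced simplicial homology of `Δ` (over `ℤ`) vanishes: the augmentation
`bd Δ 0` is surjective (vanishing of `H̃₋₁`, i.e. nonemptiness) and every cycle is a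
boundary in every degree. -/
def AcyclicAll {V : Type} [LinearOrder V] (Δ : Finset (Finset V)) : Prop :=
  Function.Surjective (bd Δ 0) ∧
    ∀ n : ℕ, ∀ c : RChain Δ (n + 1), bd Δ n c = 0 → ∃ b, bd Δ (n + 1) b = c

section Complexes

variable {V : Type}

lemma mem_gen {S : Finset (Finset V)} {σ : Finset V} :
    σ ∈ gen S ↔ (∃ F ∈ S, σ ⊆ F) ∧ σ ≠ ∅ := by
  simp only [gen, Finset.mem_biUnion, Finset.mem_filter, Finset.mem_powerset]
  exact ⟨fun ⟨F, hF, hσF, hσ⟩ => ⟨⟨F, hF, hσF⟩, hσ⟩, fun ⟨⟨F, hF, hσF⟩, hσ⟩ => ⟨F, hF, hσF, hσ⟩⟩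

lemma gen_empty : gen (∅ : Finset (Finset V)) = ∅ := rfl

lemma isComplex_gen (S : Finset (Finset V)) : IsComplex (gen S) := by
  refine ⟨fun h => (mem_gen.1 h).2 rfl, fun F hF G hGF hG => ?_⟩
  obtain ⟨⟨K, hK, hFK⟩, _⟩ := mem_gen.1 hF
  exact mem_gen.2 ⟨⟨K, hK, hGF.trans hFK⟩, hG⟩

lemma IsComplex.ne_empty {Δ : Finset (Finset V)} (hΔ : IsComplex Δ) {σ : Finset V}
    (hσ : σ ∈ Δ) : σ ≠ ∅ :=
  fun h => hΔ.1 (h ▸ hσ)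

lemma IsComplex.nonempty_of_mem {Δ : Finset (Finset V)} (hΔ : IsComplex Δ) {σ : Finset V}
    (hσ : σ ∈ Δ) : σ.Nonempty :=
  Finset.nonempty_iff_ne_empty.2 (hΔ.ne_empty hσ)

lemma IsComplex.mem_or_eq_empty {Δ : Finset (Finset V)} (hΔ : IsComplex Δ) {σ τ : Finset V}
    (hσ : σ ∈ Δ) (hτ : τ ⊆ σ) : τ ∈ Δ ∨ τ = ∅ :=
  or_iff_not_imp_right.2 (hΔ.2 σ hσ τ hτ)

lemma facets_subset (Δ : Finset (Finset V)) : facets Δ ⊆ Δ := Finset.filter_subset _ _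

lemma eq_of_mem_facets {Δ : Finset (Finset V)} {F G : Finset V} (hF : F ∈ facets Δ)
    (hG : G ∈ Δ) (hFG : F ⊆ G) : F = G :=
  (Finset.mem_filter.1 hF).2 G hG hFG

lemma exists_mem_facets_superset {Δ : Finset (Finset V)} {σ : Finset V} (hσ : σ ∈ Δ) :
    ∃ F ∈ facets Δ, σ ⊆ F := by
  obtain ⟨F, hσF, hF⟩ := Δ.exists_le_maximal hσ
  exact ⟨F, Finset.mem_filter.2 ⟨hF.prop, fun G hG hFG => hF.eq_of_le hG hFG⟩, hσF⟩

lemma gen_facets {Δ : Finset (Finset V)} (hΔ : IsComplex Δ) : gen (facets Δ) = Δ := by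
  ext σ
  rw [mem_gen]
  refine ⟨fun ⟨⟨F, hF, hσF⟩, hσ⟩ => hΔ.2 F (facets_subset Δ hF) σ hσF hσ,
    fun hσ => ⟨exists_mem_facets_superset hσ, hΔ.ne_empty hσ⟩⟩

lemma gen_subset {Δ S : Finset (Finset V)} (hΔ : IsComplex Δ) (hS : S ⊆ Δ) : gen S ⊆ Δ := by
  intro σ hσ
  obtain ⟨⟨F, hF, hσF⟩, hσ⟩ := mem_gen.1 hσ
  exact hΔ.2 F (hS hF) σ hσF hσ

lemma facets_gen {Δ S : Finset (Finset V)} (hΔ : IsComplex Δ) (hS : S ⊆ facets Δ) :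
    facets (gen S) = S := by
  have hSgen : ∀ {F}, F ∈ S → F ∈ gen S := fun hF =>
    mem_gen.2 ⟨⟨_, hF, subset_rfl⟩, hΔ.ne_empty (facets_subset Δ (hS hF))⟩
  ext σ
  refine ⟨fun hσ => ?_, fun hσ => Finset.mem_filter.2 ⟨hSgen hσ, fun G hG hσG => ?_⟩⟩
  · obtain ⟨⟨F, hF, hσF⟩, _⟩ := mem_gen.1 (facets_subset _ hσ)
    rwa [eq_of_mem_facets hσ (hSgen hF) hσF]
  · obtain ⟨⟨F, hF, hGF⟩, _⟩ := mem_gen.1 hG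
    have hσF : σ = F := eq_of_mem_facets (hS hσ) (facets_subset Δ (hS hF)) (hσG.trans hGF)
    exact hσG.antisymm (hσF ▸ hGF)

lemma subset_of_notMem_gen_erase {Δ : Finset (Finset V)} (hΔ : IsComplex Δ) {F σ : Finset V}
    (hσ : σ ∈ Δ) (hσ' : σ ∉ gen ((facets Δ).erase F)) : σ ⊆ F := by
  obtain ⟨K, hK, hσK⟩ := exists_mem_facets_superset hσ
  by_contra hσF
  have hKF : K ≠ F := by rintro rfl; exact hσF hσK
  exact hσ' (mem_gen.2 ⟨⟨K, Finset.mem_erase.2 ⟨hKF, hK⟩, hσK⟩, hΔ.ne_empty hσ⟩)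

end Complexes

section Connectivity

variable {V : Type}

def SkelAdj (Δ : Finset (Finset V)) (a b : V) : Prop := ∃ σ ∈ Δ, a ∈ σ ∧ b ∈ σ

lemma mem_vtx {Δ : Finset (Finset V)} {a : V} : a ∈ vtx Δ ↔ ∃ σ ∈ Δ, a ∈ σ := by
  simp [vtx, Finset.mem_sup]

lemma inter_nonempty_of_conn {Δ : Finset (Finset V)} (hΔ : IsComplex Δ) (hC : Conn Δ)
    {F G : Finset V} (hF : F ∈ facets Δ) (hG : G ∈ facets Δ)
    (hjoint : ∀ H ∈ facets Δ, H ≠ F → F ∩ H ⊆ G) : (F ∩ G).Nonempty := by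
  by_contra hFG
  rw [Finset.not_nonempty_iff_eq_empty] at hFG
  have hdisj : ∀ H ∈ facets Δ, H ≠ F → F ∩ H = ∅ := fun H hH hHF =>
    Finset.subset_empty.1 (hFG ▸ Finset.subset_inter Finset.inter_subset_left (hjoint H hH hHF))
  -- no facet other than `F` meets `F`, so paths starting in `F` stay in `F`
  have hclosed : ∀ a b, a ∈ F → SkelAdj Δ a b → b ∈ F := by
    rintro a b haF ⟨σ, hσ, haσ, hbσ⟩
    obtain ⟨K, hK, hσK⟩ := exists_mem_facets_superset hσ
    by_cases hKF : K = F
    · exact hKF ▸ hσK hbσ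
    · exact absurd (hdisj K hK hKF) (Finset.nonempty_iff_ne_empty.1 ⟨a, by simp [haF, hσK haσ]⟩)
  obtain ⟨u, hu⟩ := hΔ.nonempty_of_mem (facets_subset Δ hF)
  obtain ⟨w, hw⟩ := hΔ.nonempty_of_mem (facets_subset Δ hG)
  have hpath : Relation.ReflTransGen (SkelAdj Δ) u w :=
    hC.2 u (mem_vtx.2 ⟨F, facets_subset Δ hF, hu⟩) w (mem_vtx.2 ⟨G, facets_subset Δ hG, hw⟩)
  have hreach : ∀ b, Relation.ReflTransGen (SkelAdj Δ) u b → b ∈ F := by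
    intro b hb
    induction hb with
    | refl => exact hu
    | tail _ hbc ih => exact hclosed _ _ ih hbc
  exact Finset.notMem_empty w (hFG ▸ Finset.mem_inter.2 ⟨hreach w hpath, hw⟩)

lemma conn_gen_erase {Δ : Finset (Finset V)} (hΔ : IsComplex Δ) (hC : Conn Δ)
    {F G : Finset V} (hG : G ∈ facets Δ) (hGF : G ≠ F)
    (hjoint : ∀ H ∈ facets Δ, H ≠ F → F ∩ H ⊆ G) : Conn (gen ((facets Δ).erase F)) := by
  set Δ' := gen ((facets Δ).erase F)
  have hGΔ' : G ∈ Δ' :=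
    mem_gen.2 ⟨⟨G, Finset.mem_erase.2 ⟨hGF, hG⟩, subset_rfl⟩, hΔ.ne_empty (facets_subset Δ hG)⟩
  have hsub : Δ' ⊆ Δ := gen_subset hΔ ((Finset.erase_subset _ _).trans (facets_subset Δ))
  have hvtxG : ∀ a ∈ F, a ∈ vtx Δ' → a ∈ G := by
    intro a haF ha
    obtain ⟨σ, hσ, haσ⟩ := mem_vtx.1 ha
    obtain ⟨⟨H, hH, hσH⟩, _⟩ := mem_gen.1 hσ
    obtain ⟨hHF, hH⟩ := Finset.mem_erase.1 hH
    exact hjoint H hH hHF (Finset.mem_inter.2 ⟨haF, hσH haσ⟩)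
  obtain ⟨g, hg⟩ := hΔ.nonempty_of_mem (facets_subset Δ hG)
  -- paths in `Δ` project to paths in `Δ'` by sending the vertices outside `Δ'` into the joint
  let π : V → V := fun a => if a ∈ vtx Δ' then a else g
  have hπ : ∀ a b, SkelAdj Δ a b → SkelAdj Δ' (π a) (π b) := by
    rintro a b ⟨σ, hσ, haσ, hbσ⟩
    by_cases hσΔ' : σ ∈ Δ'
    · have ha : a ∈ vtx Δ' := mem_vtx.2 ⟨σ, hσΔ', haσ⟩
      have hb : b ∈ vtx Δ' := mem_vtx.2 ⟨σ, hσΔ', hbσ⟩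
      exact ⟨σ, hσΔ', by simpa [π, ha] using haσ, by simpa [π, hb] using hbσ⟩
    · have hσF := subset_of_notMem_gen_erase hΔ hσ hσΔ'
      have hπG : ∀ c ∈ σ, π c ∈ G := fun c hc => by
        by_cases hcv : c ∈ vtx Δ'
        · simpa [π, hcv] using hvtxG c (hσF hc) hcv
        · simpa [π, hcv] using hg
      exact ⟨G, hGΔ', hπG a haσ, hπG b hbσ⟩
  refine ⟨⟨G, hGΔ'⟩, fun u hu w hw => ?_⟩
  have hvtx : vtx Δ' ⊆ vtx Δ := fun a ha =>
    mem_vtx.2 ((mem_vtx.1 ha).imp fun _ h => ⟨hsub h.1, h.2⟩)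
  have hpath : Relation.ReflTransGen (SkelAdj Δ') (π u) (π w) :=
    Relation.ReflTransGen.lift π hπ u w (hC.2 u (hvtx hu) w (hvtx hw))
  rwa [show π u = u from if_pos hu, show π w = w from if_pos hw] at hpath

end Connectivity

section Chains

variable {V : Type} {Δ : Finset (Finset V)} {n : ℕ} {σ : Finset V}

def faceChain (Δ : Finset (Finset V)) (n : ℕ) (σ : Finset V) : RChain Δ n :=
  if h : (σ ∈ Δ ∨ σ = ∅) ∧ σ.card = n then Finsupp.single ⟨σ, h⟩ 1 else 0

lemma faceChain_eq_single (h : (σ ∈ Δ ∨ σ = ∅) ∧ σ.card = n) :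
    faceChain Δ n σ = Finsupp.single ⟨σ, h⟩ 1 :=
  dif_pos h

lemma faceChain_of_card_ne (h : σ.card ≠ n) : faceChain Δ n σ = 0 :=
  dif_neg fun h' => h h'.2

lemma single_eq_smul_faceChain (F : {F : Finset V // (F ∈ Δ ∨ F = ∅) ∧ F.card = n}) (a : ℤ) :
    Finsupp.single F a = a • faceChain Δ n F.1 := by
  rw [faceChain_eq_single F.2, Finsupp.smul_single, smul_eq_mul, mul_one]

lemma mem_of_forall_faceChain_mem {S : Submodule ℤ (RChain Δ n)}
    (hS : ∀ σ, (σ ∈ Δ ∨ σ = ∅) → σ.card = n → faceChain Δ n σ ∈ S) (c : RChain Δ n) :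
    c ∈ S := by
  induction c using Finsupp.induction_linear with
  | zero => exact S.zero_mem
  | add c d hc hd => exact S.add_mem hc hd
  | single F a =>
    rw [single_eq_smul_faceChain]
    exact S.smul_mem a (hS F.1 F.2.1 F.2.2)

lemma RChain.hom_ext {M : Type*} [AddCommMonoid M] [Module ℤ M] {f g : RChain Δ n →ₗ[ℤ] M}
    (h : ∀ σ, (σ ∈ Δ ∨ σ = ∅) → σ.card = n → f (faceChain Δ n σ) = g (faceChain Δ n σ)) :
    f = g :=
  Finsupp.lhom_ext fun F a => by
    rw [single_eq_smul_faceChain, map_smul, map_smul, h F.1 F.2.1 F.2.2]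

variable {Δ' : Finset (Finset V)} (hsub : Δ' ⊆ Δ)

def chainIncl (n : ℕ) : RChain Δ' n →ₗ[ℤ] RChain Δ n :=
  Finsupp.lmapDomain ℤ ℤ fun F => ⟨F.1, F.2.1.imp_left (@hsub _), F.2.2⟩

lemma chainIncl_injective (n : ℕ) : Function.Injective (chainIncl hsub n) :=
  Finsupp.mapDomain_injective fun _ _ h => Subtype.ext (Subtype.mk.inj h)

lemma chainIncl_faceChain (hσ : σ ∈ Δ' ∨ σ = ∅) :
    chainIncl hsub n (faceChain Δ' n σ) = faceChain Δ n σ := by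
  by_cases hn : σ.card = n
  · rw [faceChain_eq_single ⟨hσ, hn⟩, faceChain_eq_single ⟨hσ.imp_left (@hsub _), hn⟩,
      chainIncl, Finsupp.lmapDomain_apply, Finsupp.mapDomain_single]
  · rw [faceChain_of_card_ne hn, faceChain_of_card_ne hn, map_zero]

lemma faceChain_mem_range_chainIncl (hσ : σ ∈ Δ' ∨ σ = ∅) :
    faceChain Δ n σ ∈ LinearMap.range (chainIncl hsub n) :=
  ⟨_, chainIncl_faceChain hsub hσ⟩

end Chains

section Signs

variable {V : Type} [LinearOrder V]

def faceSign (σ : Finset V) (x : V) : ℤ := (-1) ^ (σ.filter (· < x)).card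

lemma faceSign_mul_self (σ : Finset V) (x : V) : faceSign σ x * faceSign σ x = 1 := by
  rw [faceSign, ← pow_add]
  exact Even.neg_one_pow ⟨_, rfl⟩

lemma faceSign_insert_self (σ : Finset V) (v : V) : faceSign (insert v σ) v = faceSign σ v := by
  rw [faceSign, Finset.filter_insert, if_neg (lt_irrefl v), faceSign]

lemma faceSign_erase_self (σ : Finset V) (v : V) : faceSign (σ.erase v) v = faceSign σ v := by
  rw [faceSign, Finset.filter_erase, Finset.erase_eq_of_notMem (by simp), faceSign]

lemma faceSign_erase {σ : Finset V} {x y : V} (hx : x ∈ σ) :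
    faceSign (σ.erase x) y = (if x < y then -1 else 1) * faceSign σ y := by
  unfold faceSign
  rw [Finset.filter_erase]
  by_cases h : x < y
  · have hxf : x ∈ σ.filter (· < y) := Finset.mem_filter.2 ⟨hx, h⟩
    rw [if_pos h, ← Finset.card_erase_add_one hxf, pow_succ]
    ring
  · rw [if_neg h, Finset.erase_eq_of_notMem (by simp [h]), one_mul]

lemma faceSign_insert {σ : Finset V} {v x : V} (hv : v ∉ σ) :
    faceSign (insert v σ) x = (if v < x then -1 else 1) * faceSign σ x := by
  unfold faceSign
  rw [Finset.filter_insert]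
  by_cases h : v < x
  · rw [if_pos h, if_pos h, Finset.card_insert_of_notMem (by simp [hv]), pow_succ]
    ring
  · rw [if_neg h, if_neg h, one_mul]

lemma faceSign_insert_mul_add_erase_mul {σ : Finset V} {v x : V} (hv : v ∉ σ) (hx : x ∈ σ) :
    faceSign σ v * faceSign (insert v σ) x + faceSign σ x * faceSign (σ.erase x) v = 0 := by
  have hxv : x ≠ v := fun h => hv (h ▸ hx)
  rw [faceSign_insert hv, faceSign_erase hx]
  rcases hxv.lt_or_gt with h | h
  · rw [if_neg (asymm h), if_pos h]; ring
  · rw [if_pos h, if_neg (asymm h)]; ring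

lemma faceSign_erase_mul_antisymm {σ : Finset V} {x y : V} (hx : x ∈ σ) (hy : y ∈ σ)
    (hxy : x ≠ y) :
    faceSign σ x * faceSign (σ.erase x) y = -(faceSign σ y * faceSign (σ.erase y) x) := by
  rw [faceSign_erase hx, faceSign_erase hy]
  rcases hxy.lt_or_gt with h | h
  · rw [if_pos h, if_neg (asymm h)]; ring
  · rw [if_neg (asymm h), if_pos h]; ring

end Signs

lemma Finset.sum_sum_eq_zero_of_antisymm {α M : Type*} [AddCommGroup M] [IsAddTorsionFree M]
    (s : Finset α) (g : α → α → M) (h : ∀ x ∈ s, ∀ y ∈ s, g x y = -g y x) :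
    ∑ x ∈ s, ∑ y ∈ s, g x y = 0 := by
  refine self_eq_neg.1 ?_
  conv_lhs => rw [Finset.sum_comm]
  simp only [← Finset.sum_neg_distrib]
  exact Finset.sum_congr rfl fun y hy => Finset.sum_congr rfl fun x hx => h x hx y hy

section Boundary

variable {V : Type} [LinearOrder V] {Δ : Finset (Finset V)} {n : ℕ} {σ : Finset V}

lemma bd_faceChain (h : (σ ∈ Δ ∨ σ = ∅) ∧ σ.card = n + 1) :
    bd Δ n (faceChain Δ (n + 1) σ) = ∑ x ∈ σ, faceSign σ x • faceChain Δ n (σ.erase x) := by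
  rw [faceChain_eq_single h, bd, Finsupp.lsum_single, LinearMap.toSpanSingleton_apply, one_smul,
    ← Finset.sum_attach σ]
  refine Finset.sum_congr rfl fun x _ => ?_
  split_ifs with hx
  · rw [faceChain_eq_single hx]; rfl
  · rw [faceChain, dif_neg hx, smul_zero]

lemma bd_comp_bd (hΔ : IsComplex Δ) (n : ℕ) : (bd Δ n).comp (bd Δ (n + 1)) = 0 := by
  refine RChain.hom_ext fun σ hσ hcard => ?_
  have hσΔ : σ ∈ Δ := hσ.resolve_right (by rintro rfl; simp at hcard)
  have hterm : ∀ x ∈ σ, bd Δ n (faceSign σ x • faceChain Δ (n + 1) (σ.erase x)) =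
      ∑ y ∈ σ, if y = x then 0 else
        (faceSign σ x * faceSign (σ.erase x) y) • faceChain Δ n ((σ.erase x).erase y) := by
    intro x hx
    rw [map_smul, bd_faceChain ⟨hΔ.mem_or_eq_empty hσΔ (σ.erase_subset x),
      by simp [Finset.card_erase_of_mem hx, hcard]⟩, Finset.smul_sum,
      ← Finset.sum_erase σ (a := x) (by simp)]
    refine Finset.sum_congr rfl fun y hy => ?_
    rw [if_neg (Finset.ne_of_mem_erase hy), smul_smul]
  rw [LinearMap.comp_apply, bd_faceChain ⟨hσ, hcard⟩, map_sum, Finset.sum_congr rfl hterm,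
    LinearMap.zero_apply]
  refine Finset.sum_sum_eq_zero_of_antisymm σ _ fun x hx y hy => ?_
  by_cases hxy : y = x
  · subst hxy; simp
  · rw [if_neg hxy, if_neg (Ne.symm hxy), Finset.erase_right_comm,
      faceSign_erase_mul_antisymm hx hy (Ne.symm hxy), neg_smul]

lemma bd_bd (hΔ : IsComplex Δ) (c : RChain Δ (n + 2)) : bd Δ n (bd Δ (n + 1) c) = 0 :=
  LinearMap.congr_fun (bd_comp_bd hΔ n) c

variable {Δ' : Finset (Finset V)}

lemma bd_chainIncl (hΔ' : IsComplex Δ') (hsub : Δ' ⊆ Δ) (c : RChain Δ' (n + 1)) :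
    bd Δ n (chainIncl hsub (n + 1) c) = chainIncl hsub n (bd Δ' n c) := by
  suffices (bd Δ n).comp (chainIncl hsub (n + 1)) = (chainIncl hsub n).comp (bd Δ' n) from
    LinearMap.congr_fun this c
  refine RChain.hom_ext fun σ hσ hcard => ?_
  have hσΔ' : σ ∈ Δ' := hσ.resolve_right (by rintro rfl; simp at hcard)
  rw [LinearMap.comp_apply, LinearMap.comp_apply, chainIncl_faceChain hsub hσ,
    bd_faceChain ⟨hσ.imp_left (@hsub _), hcard⟩, bd_faceChain ⟨hσ, hcard⟩, map_sum]
  refine Finset.sum_congr rfl fun x _ => ?_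
  rw [map_smul, chainIncl_faceChain hsub (hΔ'.mem_or_eq_empty hσΔ' (σ.erase_subset x))]

def cone (Δ Δ' : Finset (Finset V)) (v : V) (n : ℕ) : RChain Δ n →ₗ[ℤ] RChain Δ (n + 1) :=
  Finsupp.lsum ℤ fun F => LinearMap.toSpanSingleton ℤ (RChain Δ (n + 1))
    (if F.1 ∉ Δ' ∧ v ∉ F.1 then faceSign F.1 v • faceChain Δ (n + 1) (insert v F.1) else 0)

variable {v : V}

lemma cone_faceChain (h : (σ ∈ Δ ∨ σ = ∅) ∧ σ.card = n) :
    cone Δ Δ' v n (faceChain Δ n σ) =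
      if σ ∉ Δ' ∧ v ∉ σ then faceSign σ v • faceChain Δ (n + 1) (insert v σ) else 0 := by
  rw [faceChain_eq_single h, cone, Finsupp.lsum_single, LinearMap.toSpanSingleton_apply,
    one_smul]

lemma bd_cone_add_cone_bd_of_notMem (hΔ : IsComplex Δ) (hσ : σ ∈ Δ) (hcard : σ.card = n + 1)
    (hσ' : σ ∉ Δ') (hv : v ∉ σ) (hins : insert v σ ∈ Δ) :
    bd Δ (n + 1) (cone Δ Δ' v (n + 1) (faceChain Δ (n + 1) σ)) +
        cone Δ Δ' v n (bd Δ n (faceChain Δ (n + 1) σ)) =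
      faceChain Δ (n + 1) σ + ∑ x ∈ σ, if σ.erase x ∈ Δ' then
        (faceSign σ v * faceSign (insert v σ) x) • faceChain Δ (n + 1) (insert v (σ.erase x))
        else 0 := by
  have hbd_cone : bd Δ (n + 1) (cone Δ Δ' v (n + 1) (faceChain Δ (n + 1) σ)) =
      faceChain Δ (n + 1) σ + ∑ x ∈ σ,
        (faceSign σ v * faceSign (insert v σ) x) • faceChain Δ (n + 1) (insert v (σ.erase x)) := by
    rw [cone_faceChain ⟨Or.inl hσ, hcard⟩, if_pos ⟨hσ', hv⟩, map_smul,
      bd_faceChain ⟨Or.inl hins, by rw [Finset.card_insert_of_notMem hv, hcard]⟩,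
      Finset.sum_insert hv, Finset.erase_insert hv, faceSign_insert_self, smul_add, smul_smul,
      faceSign_mul_self, one_smul, Finset.smul_sum]
    refine congrArg _ (Finset.sum_congr rfl fun x hx => ?_)
    rw [Finset.erase_insert_of_ne (ne_of_mem_of_not_mem hx hv).symm, smul_smul]
  have hcone_bd : cone Δ Δ' v n (bd Δ n (faceChain Δ (n + 1) σ)) = ∑ x ∈ σ,
      if σ.erase x ∈ Δ' then 0 else
        (faceSign σ x * faceSign (σ.erase x) v) • faceChain Δ (n + 1) (insert v (σ.erase x)) := by
    rw [bd_faceChain ⟨Or.inl hσ, hcard⟩, map_sum]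
    refine Finset.sum_congr rfl fun x hx => ?_
    rw [map_smul, cone_faceChain ⟨hΔ.mem_or_eq_empty hσ (σ.erase_subset x),
      by rw [Finset.card_erase_of_mem hx, hcard]; rfl⟩]
    have hvx : v ∉ σ.erase x := fun h => hv (Finset.mem_of_mem_erase h)
    rcases em (σ.erase x ∈ Δ') with hx' | hx'
    · simp [hx']
    · simp [hx', hvx, smul_smul]
  rw [hbd_cone, hcone_bd, add_assoc, ← Finset.sum_add_distrib]
  refine congrArg _ (Finset.sum_congr rfl fun x hx => ?_)
  split_ifs
  · exact add_zero _
  · rw [← add_smul, faceSign_insert_mul_add_erase_mul hv hx, zero_smul]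

lemma bd_cone_add_cone_bd_of_apex_mem (hΔ : IsComplex Δ) (hσ : σ ∈ Δ) (hcard : σ.card = n + 1)
    (hv : v ∈ σ) :
    bd Δ (n + 1) (cone Δ Δ' v (n + 1) (faceChain Δ (n + 1) σ)) +
        cone Δ Δ' v n (bd Δ n (faceChain Δ (n + 1) σ)) =
      if σ.erase v ∈ Δ' then 0 else faceChain Δ (n + 1) σ := by
  have hvalid : ∀ x ∈ σ, (σ.erase x ∈ Δ ∨ σ.erase x = ∅) ∧ (σ.erase x).card = n := fun x hx =>
    ⟨hΔ.mem_or_eq_empty hσ (σ.erase_subset x), by rw [Finset.card_erase_of_mem hx, hcard]; rfl⟩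
  rw [cone_faceChain ⟨Or.inl hσ, hcard⟩, if_neg fun h => h.2 hv, map_zero, zero_add,
    bd_faceChain ⟨Or.inl hσ, hcard⟩, map_sum, Finset.sum_eq_single_of_mem v hv]
  · rw [map_smul, cone_faceChain (hvalid v hv)]
    rcases em (σ.erase v ∈ Δ') with hv' | hv'
    · simp [hv']
    · rw [if_pos ⟨hv', σ.notMem_erase v⟩, if_neg hv', smul_smul, Finset.insert_erase hv,
        faceSign_erase_self, faceSign_mul_self, one_smul]
  · intro x hx hxv
    rw [map_smul, cone_faceChain (hvalid x hx),
      if_neg fun h => h.2 (Finset.mem_erase.2 ⟨Ne.symm hxv, hv⟩), smul_zero]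

end Boundary

section Acyclicity

variable {V : Type} [LinearOrder V]

def CyclesAreBoundaries (Δ : Finset (Finset V)) : Prop :=
  ∀ n : ℕ, ∀ c : RChain Δ (n + 1), bd Δ n c = 0 → ∃ b, bd Δ (n + 1) b = c

lemma cyclesAreBoundaries_empty : CyclesAreBoundaries (∅ : Finset (Finset V)) := by
  refine fun n c _ => ⟨0, Finsupp.ext fun F => ?_⟩
  obtain ⟨hF, hcard⟩ := F.2
  simp only [Finset.notMem_empty, false_or] at hF
  simp [hF] at hcard

lemma bd_zero_surjective {Δ : Finset (Finset V)} (hΔ : IsComplex Δ) (hne : Δ.Nonempty) :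
    Function.Surjective (bd Δ 0) := by
  obtain ⟨σ, hσ⟩ := hne
  obtain ⟨u, hu⟩ := hΔ.nonempty_of_mem hσ
  have hu' : {u} ∈ Δ := hΔ.2 σ hσ {u} (Finset.singleton_subset_iff.2 hu) (by simp)
  have hvertex : bd Δ 0 (faceChain Δ 1 {u}) = faceChain Δ 0 ∅ := by
    rw [bd_faceChain (n := 0) ⟨Or.inl hu', Finset.card_singleton u⟩, Finset.sum_singleton,
      Finset.erase_singleton, ← Finset.insert_empty, faceSign_insert_self]
    simp [faceSign]
  refine fun c => LinearMap.mem_range.1 (mem_of_forall_faceChain_mem (fun τ _ hτ => ?_) c)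
  rw [Finset.card_eq_zero.1 hτ, ← hvertex]
  exact LinearMap.mem_range_self _ _

variable {Δ Δ' : Finset (Finset V)} {v : V}

lemma sub_bd_cone_sub_cone_bd_mem_range (hΔ : IsComplex Δ) (hΔ' : IsComplex Δ')
    (hsub : Δ' ⊆ Δ) (hcone : ∀ σ ∈ Δ, σ ∉ Δ' → insert v σ ∈ Δ)
    (hclosed : ∀ τ ∈ Δ', insert v τ ∈ Δ → insert v τ ∈ Δ') (hapex : Δ'.Nonempty → {v} ∈ Δ')
    {n : ℕ} (c : RChain Δ (n + 1)) :
    c - bd Δ (n + 1) (cone Δ Δ' v (n + 1) c) - cone Δ Δ' v n (bd Δ n c) ∈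
      LinearMap.range (chainIncl hsub (n + 1)) := by
  set T := LinearMap.range (chainIncl hsub (n + 1))
  have hT : ∀ {τ}, τ ∈ Δ' → faceChain Δ (n + 1) τ ∈ T := fun hτ =>
    faceChain_mem_range_chainIncl hsub (Or.inl hτ)
  change c ∈ T.comap
    (LinearMap.id - (bd Δ (n + 1)).comp (cone Δ Δ' v (n + 1)) - (cone Δ Δ' v n).comp (bd Δ n))
  refine mem_of_forall_faceChain_mem (fun σ hσ hcard => ?_) c
  have hσΔ : σ ∈ Δ := hσ.resolve_right (by rintro rfl; simp at hcard)
  simp only [Submodule.mem_comap, LinearMap.sub_apply, LinearMap.id_apply, LinearMap.comp_apply]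
  rw [sub_sub]
  by_cases hv : v ∈ σ
  · rw [bd_cone_add_cone_bd_of_apex_mem hΔ hσΔ hcard hv]
    split_ifs with hv'
    · rw [sub_zero, ← Finset.insert_erase hv]
      exact hT (hclosed _ hv' (by rwa [Finset.insert_erase hv]))
    · rw [sub_self]
      exact T.zero_mem
  by_cases hσ' : σ ∈ Δ'
  · -- the cone over `σ ∈ Δ'` vanishes, and only the empty face of `∂σ` gets coned, to `{v}`
    rw [cone_faceChain ⟨hσ, hcard⟩, if_neg fun h => h.1 hσ', map_zero, zero_add,
      bd_faceChain ⟨hσ, hcard⟩, map_sum]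
    refine T.sub_mem (hT hσ') (T.sum_mem fun x hx => ?_)
    rw [map_smul, cone_faceChain ⟨hΔ.mem_or_eq_empty hσΔ (σ.erase_subset x),
      by rw [Finset.card_erase_of_mem hx, hcard]; rfl⟩]
    split_ifs with hx'
    · rw [(hΔ'.mem_or_eq_empty hσ' (σ.erase_subset x)).resolve_left hx'.1, Finset.insert_empty]
      exact T.smul_mem _ (T.smul_mem _ (hT (hapex ⟨σ, hσ'⟩)))
    · exact T.smul_mem _ T.zero_mem
  · have hins := hcone σ hσΔ hσ'
    rw [bd_cone_add_cone_bd_of_notMem hΔ hσΔ hcard hσ' hv hins, sub_add_cancel_left]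
    refine T.neg_mem (T.sum_mem fun x _ => ?_)
    split_ifs with hx'
    · refine T.smul_mem _ (hT (hclosed _ hx' (hΔ.2 _ hins _ ?_ (Finset.insert_ne_empty _ _))))
      exact Finset.insert_subset_insert v (σ.erase_subset x)
    · exact T.zero_mem

theorem CyclesAreBoundaries.of_coneOff (hΔ : IsComplex Δ) (hΔ' : IsComplex Δ') (hsub : Δ' ⊆ Δ)
    (hcone : ∀ σ ∈ Δ, σ ∉ Δ' → insert v σ ∈ Δ)
    (hclosed : ∀ τ ∈ Δ', insert v τ ∈ Δ → insert v τ ∈ Δ') (hapex : Δ'.Nonempty → {v} ∈ Δ')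
    (h' : CyclesAreBoundaries Δ') : CyclesAreBoundaries Δ := by
  intro n c hc
  obtain ⟨c', hc'⟩ : c - bd Δ (n + 1) (cone Δ Δ' v (n + 1) c) ∈
      LinearMap.range (chainIncl hsub (n + 1)) := by
    simpa [hc] using sub_bd_cone_sub_cone_bd_mem_range hΔ hΔ' hsub hcone hclosed hapex c
  have hcycle : bd Δ' n c' = 0 := by
    refine chainIncl_injective hsub n ?_
    rw [← bd_chainIncl hΔ' hsub, hc', map_sub, hc, bd_bd hΔ, sub_zero, map_zero]
  obtain ⟨b', hb'⟩ := h' n c' hcycle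
  refine ⟨cone Δ Δ' v (n + 1) c + chainIncl hsub (n + 2) b', ?_⟩
  rw [map_add, bd_chainIncl hΔ' hsub, hb', hc', add_sub_cancel]

end Acyclicity

section Trees

variable {V : Type} {Δ : Finset (Finset V)} {F G : Finset V}

lemma IsForest.exists_leaf (hΔ : IsComplex Δ) (hforest : IsForest Δ) (hne : Δ.Nonempty) :
    ∃ F, IsLeaf Δ F := by
  obtain ⟨σ, hσ⟩ := hne
  obtain ⟨K, hK, _⟩ := exists_mem_facets_superset hσ
  simpa [HasLeaf, gen_facets hΔ] using hforest (facets Δ) subset_rfl ⟨K, hK⟩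

lemma IsTree.gen_erase (hΔ : IsComplex Δ) (hT : IsTree Δ) (hG : G ∈ facets Δ) (hGF : G ≠ F)
    (hjoint : ∀ H ∈ facets Δ, H ≠ F → F ∩ H ⊆ G) : IsTree (gen ((facets Δ).erase F)) := by
  refine ⟨conn_gen_erase hΔ hT.1 hG hGF hjoint, fun S hS hSne => hT.2 S ?_ hSne⟩
  rw [facets_gen hΔ (Finset.erase_subset _ _)] at hS
  exact hS.trans (Finset.erase_subset _ _)

variable [LinearOrder V]

lemma CyclesAreBoundaries.of_gen_erase (hΔ : IsComplex Δ) (hF : F ∈ facets Δ) {v : V}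
    (hvF : v ∈ F) (hjoint : ∀ H ∈ facets Δ, H ≠ F → ∃ G ∈ (facets Δ).erase F, insert v (F ∩ H) ⊆ G)
    (h' : CyclesAreBoundaries (gen ((facets Δ).erase F))) : CyclesAreBoundaries Δ := by
  have hjoint' : ∀ τ ∈ gen ((facets Δ).erase F), ∃ G ∈ (facets Δ).erase F,
      insert v (F ∩ τ) ⊆ G := by
    intro τ hτ
    obtain ⟨⟨H, hH, hτH⟩, _⟩ := mem_gen.1 hτ
    obtain ⟨hHF, hH⟩ := Finset.mem_erase.1 hH
    obtain ⟨G, hG, hFHG⟩ := hjoint H hH hHF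
    exact ⟨G, hG, (Finset.insert_subset_insert v (Finset.inter_subset_inter_left hτH)).trans hFHG⟩
  refine h'.of_coneOff (v := v) hΔ (isComplex_gen _)
    (gen_subset hΔ ((Finset.erase_subset _ _).trans (facets_subset Δ))) (fun σ hσ hσ' => ?_)
    (fun τ hτ hins => ?_) (fun ⟨τ, hτ⟩ => ?_)
  · refine hΔ.2 F (facets_subset Δ hF) _ ?_ (Finset.insert_ne_empty _ _)
    exact Finset.insert_subset hvF (subset_of_notMem_gen_erase hΔ hσ hσ')
  · by_contra hins'
    have hτF : τ ⊆ F :=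
      (Finset.subset_insert v τ).trans (subset_of_notMem_gen_erase hΔ hins hins')
    obtain ⟨G, hG, hFτG⟩ := hjoint' τ hτ
    rw [Finset.inter_eq_right.2 hτF] at hFτG
    exact hins' (mem_gen.2 ⟨⟨G, hG, hFτG⟩, Finset.insert_ne_empty _ _⟩)
  · obtain ⟨G, hG, hFτG⟩ := hjoint' τ hτ
    refine mem_gen.2 ⟨⟨G, hG, ?_⟩, Finset.singleton_ne_empty v⟩
    exact Finset.singleton_subset_iff.2 (hFτG (Finset.mem_insert_self v _))

theorem IsTree.cyclesAreBoundaries {Δ : Finset (Finset V)} (hΔ : IsComplex Δ) (hT : IsTree Δ) :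
    CyclesAreBoundaries Δ := by
  obtain ⟨F, hF, hleaf⟩ := hT.2.exists_leaf hΔ hT.1.1
  rcases hleaf with hsingle | ⟨G, hG, hGF, hjoint⟩
  · obtain ⟨v, hv⟩ := hΔ.nonempty_of_mem (facets_subset Δ hF)
    refine .of_gen_erase hΔ hF hv (fun H hH hHF => absurd (hsingle ▸ hH) (by simpa using hHF)) ?_
    rw [hsingle, Finset.erase_singleton, gen_empty]
    exact cyclesAreBoundaries_empty
  · obtain ⟨v, hv⟩ := inter_nonempty_of_conn hΔ hT.1 hF hG hjoint
    rw [Finset.mem_inter] at hv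
    refine .of_gen_erase hΔ hF hv.1 (fun H hH hHF =>
      ⟨G, Finset.mem_erase.2 ⟨hGF, hG⟩, Finset.insert_subset hv.2 (hjoint H hH hHF)⟩) ?_
    exact IsTree.cyclesAreBoundaries (isComplex_gen _) (hT.gen_erase hΔ hG hGF hjoint)
termination_by (facets Δ).card
decreasing_by
  rw [facets_gen hΔ (Finset.erase_subset _ _)]
  exact Finset.card_erase_lt_of_mem hF

end Trees

/-- Every simplicial tree is contractible; in particular all of its
reduced simplicial homology groups (here over `ℤ`) vanish: the augmentation map is
surjective and in every degree every cycle is a boundary. -/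
theorem tree_acyclic {V : Type} [LinearOrder V] (Δ : Finset (Finset V))
    (hΔ : IsComplex Δ) (hT : IsTree Δ) : AcyclicAll Δ :=
  ⟨bd_zero_surjective hΔ hT.1.1, hT.cyclesAreBoundaries hΔ⟩
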